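/- Let t > 1 and let G be a finite simple graph whose adjacency matrix has spectrum {(4t+1)^1, (2t−1)^{2t}, (−1)^{(t+1)^2}, (−3)^{t^2}}. Let Q be a set of q vertices of G such that every vertex of Q has at least q−2 neighbors inside Q. Then q ≤ 2t+3. Moreover, if q = 2t+3, then exactly one vertex of Q has 2t+2 neighbors inside Q and the remaining 2t+2 vertices of Q each have exactly 2t+1 neighbors inside Q. -/

import Mathlib

open Polynomial Matrix SimpleGraph

/-- The `n × n`-grid: the Cartesian (box) product of two complete graphs on `Fin n`.
Vertices are pairs `(i, j)`, two distinct vertices being adjacent iff they agree in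
exactly one coordinate. -/
def gridGraph (n : ℕ) : SimpleGraph (Fin n × Fin n) :=
  (⊤ : SimpleGraph (Fin n)) □ (⊤ : SimpleGraph (Fin n))

/-- The `q`-clique extension of a graph `G`: the graph on `V × Fin q` in which `(x, i)`
and `(y, j)` are adjacent iff `x` and `y` are adjacent in `G`, or `x = y` and `i ≠ j`. -/
def cliqueExt {V : Type*} (q : ℕ) (G : SimpleGraph V) : SimpleGraph (V × Fin q) where
  Adj a b := G.Adj a.1 b.1 ∨ (a.1 = b.1 ∧ a.2 ≠ b.2)
  symm := by
    constructor
    rintro ⟨x, i⟩ ⟨y, j⟩ (h | ⟨h, hij⟩)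
    · exact Or.inl h.symm
    · exact Or.inr ⟨h.symm, hij.symm⟩
  loopless := by
    constructor
    rintro ⟨x, i⟩ (h | ⟨-, hij⟩)
    · exact G.loopless.irrefl x h
    · exact hij rfl

instance cliqueExtAdjDec {V : Type*} (q : ℕ) (G : SimpleGraph V) [DecidableRel G.Adj]
    [DecidableEq V] : DecidableRel (cliqueExt q G).Adj :=
  fun a b => inferInstanceAs (Decidable (G.Adj a.1 b.1 ∨ (a.1 = b.1 ∧ a.2 ≠ b.2)))

instance boxProdAdjDec {α β : Type*} (G : SimpleGraph α) (H : SimpleGraph β)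
    [DecidableRel G.Adj] [DecidableRel H.Adj] [DecidableEq α] [DecidableEq β] :
    DecidableRel (G □ H).Adj :=
  fun x y => inferInstanceAs (Decidable (G.Adj x.1 y.1 ∧ x.2 = y.2 ∨ H.Adj x.2 y.2 ∧ x.1 = y.1))

instance gridAdjDec (n : ℕ) : DecidableRel (gridGraph n).Adj := by
  unfold gridGraph; infer_instance

/-!
Write `A` for the adjacency matrix and `n = 2(t+1)²` for the number of vertices. Since
`trace A² = ∑ λ² = (4t+1)n` is the degree sum and every eigenvalue is at most `4t+1`, the Rayleigh
quotient of the all-ones vector `𝟙` is maximal, so `𝟙` is an eigenvector: `G` is `(4t+1)`-regular.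
The eigenvalue `4t+1` is simple, so `xᵀAx ≤ (2t-1)‖x‖²` for `x ⊥ 𝟙`. Taking `x = n·𝟙_Q - q·𝟙`
gives `n·∑_{v∈Q} deg_Q v ≤ (2t-1)q(n-q) + (4t+1)q²`. Against `deg_Q ≥ q-2` this forces
`q ≤ 2t+3`, and for `q = 2t+3` it allows at most two vertices of inner degree `q-1`; since the
inner degree sum is even and `q(q-2)` is odd, there is exactly one.
-/

open Finset

namespace Matrix.IsHermitian

variable {n : Type*} [Fintype n] [DecidableEq n] {A : Matrix n n ℝ} (hA : A.IsHermitian)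

lemma sum_eigenvectorBasis_dotProduct_mul (x y : n → ℝ) :
    ∑ i, (⇑(hA.eigenvectorBasis i) ⬝ᵥ x) * (⇑(hA.eigenvectorBasis i) ⬝ᵥ y) = x ⬝ᵥ y := by
  have := hA.eigenvectorBasis.sum_inner_mul_inner (WithLp.toLp 2 x) (WithLp.toLp 2 y)
  simp only [EuclideanSpace.inner_eq_star_dotProduct, star_trivial] at this
  simpa only [dotProduct_comm] using this

lemma eigenvectorBasis_dotProduct_mulVec (i : n) (x : n → ℝ) :
    ⇑(hA.eigenvectorBasis i) ⬝ᵥ (A *ᵥ x) = hA.eigenvalues i * (⇑(hA.eigenvectorBasis i) ⬝ᵥ x) := by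
  have hAt : Aᵀ = A := by simpa [conjTranspose_eq_transpose_of_trivial] using hA.eq
  rw [dotProduct_mulVec, ← mulVec_transpose, hAt, hA.mulVec_eigenvectorBasis, smul_dotProduct,
    smul_eq_mul]

lemma dotProduct_mulVec_eq_sum (x y : n → ℝ) :
    x ⬝ᵥ (A *ᵥ y) = ∑ i, hA.eigenvalues i *
      ((⇑(hA.eigenvectorBasis i) ⬝ᵥ x) * (⇑(hA.eigenvectorBasis i) ⬝ᵥ y)) := by
  rw [← hA.sum_eigenvectorBasis_dotProduct_mul]
  simp only [eigenvectorBasis_dotProduct_mulVec]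
  exact Finset.sum_congr rfl fun i _ => by ring

lemma trace_mul_self : (A * A).trace = ∑ i, hA.eigenvalues i ^ 2 := by
  conv_lhs => rw [hA.spectral_theorem, ← map_mul, Unitary.conjStarAlgAut_apply, trace_mul_cycle,
    Unitary.coe_star_mul_self, one_mul, diagonal_mul_diagonal, trace_diagonal]
  simp [sq]

lemma mulVec_eq_smul_of_dotProduct_mulVec_eq {μ : ℝ} (hle : ∀ i, hA.eigenvalues i ≤ μ)
    {x : n → ℝ} (hx : x ⬝ᵥ (A *ᵥ x) = μ * (x ⬝ᵥ x)) : A *ᵥ x = μ • x := by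
  set c : n → (n → ℝ) → ℝ := fun i y => ⇑(hA.eigenvectorBasis i) ⬝ᵥ y
  have hterm : ∀ i, (μ - hA.eigenvalues i) * (c i x * c i x) = 0 := by
    have hsum : ∑ i, (μ - hA.eigenvalues i) * (c i x * c i x) = 0 := by
      simp only [sub_mul, Finset.sum_sub_distrib, ← Finset.mul_sum, c,
        hA.sum_eigenvectorBasis_dotProduct_mul, ← hA.dotProduct_mulVec_eq_sum, hx, sub_self]
    intro i
    refine (Finset.sum_eq_zero_iff_of_nonneg fun j _ => ?_).mp hsum i (Finset.mem_univ i)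
    exact mul_nonneg (sub_nonneg.mpr (hle j)) (mul_self_nonneg _)
  have hcoord : ∀ i, hA.eigenvalues i * c i x = μ * c i x := fun i => by
    rcases mul_eq_zero.mp (hterm i) with h | h
    · rw [sub_eq_zero.mp h]
    · rw [mul_self_eq_zero.mp h, mul_zero, mul_zero]
  refine dotProduct_eq _ _ fun y => ?_
  rw [dotProduct_comm, hA.dotProduct_mulVec_eq_sum, dotProduct_comm, dotProduct_smul,
    smul_eq_mul, ← hA.sum_eigenvectorBasis_dotProduct_mul, Finset.mul_sum]
  refine Finset.sum_congr rfl fun i _ => ?_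
  linear_combination c i y * hcoord i

lemma dotProduct_mulVec_le_of_dotProduct_eq_zero {μ l : ℝ}
    (hsub : ∀ i j, μ < hA.eigenvalues i → μ < hA.eigenvalues j → i = j) (hμl : μ < l)
    {v : n → ℝ} (hv : A *ᵥ v = l • v) (hv0 : v ≠ 0) {x : n → ℝ} (hxv : x ⬝ᵥ v = 0) :
    x ⬝ᵥ (A *ᵥ x) ≤ μ * (x ⬝ᵥ x) := by
  set c : n → (n → ℝ) → ℝ := fun i y => ⇑(hA.eigenvectorBasis i) ⬝ᵥ y
  have hsupp : ∀ i, c i v ≠ 0 → hA.eigenvalues i = l := fun i hi => by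
    have := hA.eigenvectorBasis_dotProduct_mulVec i v
    rw [hv, dotProduct_smul, smul_eq_mul] at this
    exact (mul_right_cancel₀ hi this).symm
  have hx0 : ∀ i, μ < hA.eigenvalues i → c i x = 0 := fun i hi => by
    have honly : ∀ j ≠ i, c j v = 0 := fun j hj => by
      by_contra h
      exact hj (hsub j i (hsupp j h ▸ hμl) hi)
    have hsingle (y : n → ℝ) : y ⬝ᵥ v = c i y * c i v := by
      rw [← hA.sum_eigenvectorBasis_dotProduct_mul]
      exact Finset.sum_eq_single i (fun j _ hj => mul_eq_zero_of_right _ (honly j hj)) (by simp)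
    have hvi : c i v ≠ 0 := fun h =>
      hv0 (dotProduct_self_eq_zero.mp (by rw [hsingle, h, mul_zero]))
    rw [hsingle] at hxv
    exact (mul_eq_zero.mp hxv).resolve_right hvi
  rw [hA.dotProduct_mulVec_eq_sum, ← hA.sum_eigenvectorBasis_dotProduct_mul, Finset.mul_sum]
  refine Finset.sum_le_sum fun i _ => ?_
  rcases le_or_gt (hA.eigenvalues i) μ with h | h
  · exact mul_le_mul_of_nonneg_right h (mul_self_nonneg _)
  · simp [show ⇑(hA.eigenvectorBasis i) ⬝ᵥ x = 0 from hx0 i h]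

lemma map_eigenvalues_eq_of_charpoly_eq {s : Multiset ℝ}
    (h : A.charpoly = (s.map fun a => X - C a).prod) : Finset.univ.val.map hA.eigenvalues = s := by
  have := hA.roots_charpoly_eq_eigenvalues
  rw [h, roots_multiset_prod_X_sub_C] at this
  simpa using this.symm

end Matrix.IsHermitian

lemma Multiset.eq_of_count_map_eq_one {ι α : Type*} [Fintype ι] [DecidableEq α] {f : ι → α} {a : α}
    (h : (Finset.univ.val.map f).count a = 1) {i j : ι} (hi : f i = a) (hj : f j = a) : i = j := by
  rw [Multiset.count_map] at h
  obtain ⟨k, hk⟩ := Multiset.card_eq_one.mp h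
  have hmem : ∀ l, f l = a → l = k := fun l hl => by
    have : l ∈ Finset.univ.val.filter (a = f ·) :=
      Multiset.mem_filter.mpr ⟨Finset.mem_univ_val l, hl.symm⟩
    rwa [hk, Multiset.mem_singleton] at this
  rw [hmem i hi, hmem j hj]

def cliqueExtGridSpectrum (t : ℕ) : Multiset ℝ :=
  {4 * (t : ℝ) + 1} + (2 * t) • {2 * (t : ℝ) - 1} + ((t + 1) ^ 2) • {-1} + (t ^ 2) • {-3}

namespace cliqueExtGridSpectrum

lemma prod_X_sub_C (t : ℕ) :
    ((cliqueExtGridSpectrum t).map fun a => X - C a).prod =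
      (X - C (4 * (t : ℝ) + 1)) * (X - C (2 * (t : ℝ) - 1)) ^ (2 * t) *
        (X + 1) ^ ((t + 1) ^ 2) * (X + 3) ^ (t ^ 2) := by
  simp only [cliqueExtGridSpectrum, Multiset.map_add, Multiset.map_nsmul, Multiset.map_singleton,
    Multiset.prod_add, Multiset.prod_nsmul, Multiset.prod_singleton, map_neg, sub_neg_eq_add,
    map_one, map_ofNat]

lemma card (t : ℕ) : Multiset.card (cliqueExtGridSpectrum t) = 2 * (t + 1) ^ 2 := by
  simp [cliqueExtGridSpectrum]; ring

lemma eq_or_le_of_mem {t : ℕ} {a : ℝ} (ha : a ∈ cliqueExtGridSpectrum t) :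
    a = 4 * t + 1 ∨ a ≤ 2 * t - 1 := by
  have ht : (0 : ℝ) ≤ t := t.cast_nonneg
  simp only [cliqueExtGridSpectrum, Multiset.mem_add, Multiset.mem_nsmul,
    Multiset.mem_singleton] at ha
  rcases ha with ((h | ⟨-, h⟩) | ⟨-, h⟩) | ⟨-, h⟩ <;> subst h
  · left; rfl
  all_goals right; linarith

lemma count (t : ℕ) : (cliqueExtGridSpectrum t).count (4 * (t : ℝ) + 1) = 1 := by
  have ht : (0 : ℝ) ≤ t := t.cast_nonneg
  simp only [cliqueExtGridSpectrum, Multiset.count_add, Multiset.count_nsmul,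
    Multiset.count_singleton]
  rw [if_pos trivial, if_neg (by intro h; linarith), if_neg (by intro h; linarith),
    if_neg (by intro h; linarith)]
  simp

lemma sum_sq (t : ℕ) :
    ((cliqueExtGridSpectrum t).map (· ^ 2)).sum = (4 * (t : ℝ) + 1) * (2 * ((t : ℝ) + 1) ^ 2) := by
  simp [cliqueExtGridSpectrum, Multiset.map_nsmul, Multiset.sum_nsmul]; ring

end cliqueExtGridSpectrum

namespace SimpleGraph

lemma IsRegularOfDegree.adjMatrix_mulVec_one {V : Type*} [Fintype V] {G : SimpleGraph V}
    [DecidableRel G.Adj] {k : ℕ} (hreg : G.IsRegularOfDegree k) :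
    G.adjMatrix ℝ *ᵥ 1 = (k : ℝ) • 1 := by
  ext v; simp [hreg v]

section Spectral

variable {V : Type*} [Fintype V] [DecidableEq V] {G : SimpleGraph V} [DecidableRel G.Adj]

lemma indicator_dotProduct_adjMatrix_mulVec (Q : Finset V) :
    (fun v => if v ∈ Q then (1 : ℝ) else 0) ⬝ᵥ
      (G.adjMatrix ℝ *ᵥ fun v => if v ∈ Q then 1 else 0) =
      ∑ v ∈ Q, (#(Q.filter (G.Adj v)) : ℝ) := by
  simp only [dotProduct, ite_mul, one_mul, zero_mul, Finset.sum_ite_mem, Finset.univ_inter,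
    adjMatrix_mulVec_apply]
  refine Finset.sum_congr rfl fun v _ => ?_
  rw [Finset.sum_const, nsmul_one, neighborFinset_eq_filter, Finset.filter_inter,
    Finset.univ_inter]

lemma card_mul_sum_card_filter_adj_le {k : ℕ} {μ : ℝ} (hreg : G.IsRegularOfDegree k)
    (hμ : ∀ x : V → ℝ, x ⬝ᵥ 1 = 0 → x ⬝ᵥ (G.adjMatrix ℝ *ᵥ x) ≤ μ * (x ⬝ᵥ x)) (Q : Finset V) :
    (Fintype.card V : ℝ) * ∑ v ∈ Q, (#(Q.filter (G.Adj v)) : ℝ) ≤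
      μ * (#Q * (Fintype.card V - #Q)) + k * #Q ^ 2 := by
  set A := G.adjMatrix ℝ
  set n : ℝ := (Fintype.card V : ℝ)
  set q : ℝ := (#Q : ℝ)
  set χ : V → ℝ := fun v => if v ∈ Q then 1 else 0
  have hA1 : A *ᵥ 1 = (k : ℝ) • 1 := hreg.adjMatrix_mulVec_one
  have hχ1 : χ ⬝ᵥ 1 = q := by simp [χ, dotProduct_one, q]
  have hχχ : χ ⬝ᵥ χ = q := by simp [χ, dotProduct, q]
  have h11 : (1 : V → ℝ) ⬝ᵥ 1 = n := by simp [n]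
  have h1Aχ : 1 ⬝ᵥ (A *ᵥ χ) = k * q := by
    rw [dotProduct_mulVec, ← mulVec_transpose, (G.isSymm_adjMatrix).eq, hA1, smul_dotProduct,
      dotProduct_comm, hχ1, smul_eq_mul]
  have hχAχ : χ ⬝ᵥ (A *ᵥ χ) = ∑ v ∈ Q, (#(Q.filter (G.Adj v)) : ℝ) :=
    indicator_dotProduct_adjMatrix_mulVec Q
  have hkey := hμ (n • χ - q • 1) (by
    rw [sub_dotProduct, smul_dotProduct, smul_dotProduct, hχ1, h11, smul_eq_mul, smul_eq_mul,
      mul_comm, sub_self])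
  simp only [mulVec_sub, mulVec_smul, dotProduct_sub, sub_dotProduct, smul_dotProduct,
    dotProduct_smul, smul_eq_mul, hχAχ, hχ1, dotProduct_comm 1 χ, hχχ, h11, h1Aχ, hA1] at hkey
  rcases (Fintype.card V).eq_zero_or_pos with h0 | hpos
  · have : Q = ∅ := Finset.eq_empty_of_forall_notMem fun v _ =>
      (Fintype.card_eq_zero_iff.mp h0).false v
    simp [q, this]
  · have hn : 0 < n := Nat.cast_pos.mpr hpos
    nlinarith

lemma isRegularOfDegree_of_eigenvalues_le {k : ℕ}
    (hle : ∀ i, (G.isHermitian_adjMatrix ℝ).eigenvalues i ≤ k)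
    (hsq : ∑ i, (G.isHermitian_adjMatrix ℝ).eigenvalues i ^ 2 = k * Fintype.card V) :
    G.IsRegularOfDegree k := by
  set hA := G.isHermitian_adjMatrix ℝ
  have hA1 : (1 : V → ℝ) ⬝ᵥ (G.adjMatrix ℝ *ᵥ 1) = k * ((1 : V → ℝ) ⬝ᵥ 1) :=
    calc (1 : V → ℝ) ⬝ᵥ (G.adjMatrix ℝ *ᵥ 1) = (G.adjMatrix ℝ * G.adjMatrix ℝ).trace := by
          simp only [one_dotProduct, adjMatrix_mulVec_apply, Pi.one_apply, sum_const,
            card_neighborFinset_eq_degree, nsmul_one, trace, Matrix.diag,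
            adjMatrix_mul_self_apply_self]
      _ = k * ((1 : V → ℝ) ⬝ᵥ 1) := by simp [hA.trace_mul_self, hsq]
  intro v
  simpa using congrFun (hA.mulVec_eq_smul_of_dotProduct_mulVec_eq hle hA1) v

lemma card_mul_sum_card_filter_adj_le_of_charpoly (t : ℕ)
    (hchar : (G.adjMatrix ℝ).charpoly =
      (X - C (4 * (t : ℝ) + 1)) * (X - C (2 * (t : ℝ) - 1)) ^ (2 * t) *
        (X + 1) ^ ((t + 1) ^ 2) * (X + 3) ^ (t ^ 2)) (Q : Finset V) :
    2 * ((t : ℝ) + 1) ^ 2 * ∑ v ∈ Q, (#(Q.filter (G.Adj v)) : ℝ) ≤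
      (2 * t - 1) * (#Q * (2 * (t + 1) ^ 2 - #Q)) + (4 * t + 1) * #Q ^ 2 := by
  set hA := G.isHermitian_adjMatrix ℝ
  have hspec : univ.val.map hA.eigenvalues = cliqueExtGridSpectrum t :=
    hA.map_eigenvalues_eq_of_charpoly_eq (by rw [hchar, cliqueExtGridSpectrum.prod_X_sub_C])
  have hmem (i : V) : hA.eigenvalues i ∈ cliqueExtGridSpectrum t :=
    hspec ▸ Multiset.mem_map_of_mem _ (mem_univ_val i)
  have hcard : Fintype.card V = 2 * (t + 1) ^ 2 := by
    simpa using congrArg Multiset.card hspec |>.trans (cliqueExtGridSpectrum.card t)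
  have hreg : G.IsRegularOfDegree (4 * t + 1) := by
    refine isRegularOfDegree_of_eigenvalues_le (fun i => ?_) ?_
    · rcases cliqueExtGridSpectrum.eq_or_le_of_mem (hmem i) with h | h <;> push_cast <;> linarith
    · have : ∑ i, hA.eigenvalues i ^ 2 = ((univ.val.map hA.eigenvalues).map (· ^ 2)).sum := by
        rw [Multiset.map_map]; rfl
      rw [this, hspec, cliqueExtGridSpectrum.sum_sq, hcard]; push_cast; ring
  have htop (i j : V) (hi : 2 * t - 1 < hA.eigenvalues i) (hj : 2 * t - 1 < hA.eigenvalues j) :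
      i = j := by
    refine Multiset.eq_of_count_map_eq_one (hspec ▸ cliqueExtGridSpectrum.count t) ?_ ?_
    · exact (cliqueExtGridSpectrum.eq_or_le_of_mem (hmem i)).resolve_right hi.not_ge
    · exact (cliqueExtGridSpectrum.eq_or_le_of_mem (hmem j)).resolve_right hj.not_ge
  have : Nonempty V := Fintype.card_pos_iff.mp (by rw [hcard]; positivity)
  have hμ (x : V → ℝ) (hx : x ⬝ᵥ 1 = 0) :
      x ⬝ᵥ (G.adjMatrix ℝ *ᵥ x) ≤ (2 * t - 1) * (x ⬝ᵥ x) :=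
    hA.dotProduct_mulVec_le_of_dotProduct_eq_zero (l := 4 * t + 1) htop
      (by linarith [t.cast_nonneg (α := ℝ)])
      (by simpa using hreg.adjMatrix_mulVec_one) one_ne_zero hx
  simpa [hcard] using card_mul_sum_card_filter_adj_le hreg hμ Q

end Spectral

variable {V : Type*} (G : SimpleGraph V) [DecidableRel G.Adj]

lemma even_sum_card_filter_adj (Q : Finset V) : Even (∑ x ∈ Q, #(Q.filter (G.Adj x))) := by
  rw [← ZMod.natCast_eq_zero_iff_even]
  simp only [card_filter, Nat.cast_sum, Nat.cast_ite, Nat.cast_one, Nat.cast_zero]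
  rw [← Finset.sum_product' (f := fun x y => if G.Adj x y then (1 : ZMod 2) else 0)]
  refine Finset.sum_involution (fun p _ => p.swap) (fun p _ => ?_) (fun p _ hp => ?_)
    (fun p hp => mem_product.mpr (mem_product.mp hp).symm) (fun p _ => p.swap_swap)
  · simp only [Prod.fst_swap, Prod.snd_swap, G.adj_comm p.2]
    split_ifs <;> decide
  · rw [Ne, ite_eq_right_iff, not_forall] at hp
    obtain ⟨hadj, -⟩ := hp
    exact fun h => hadj.ne (congrArg Prod.fst h).symm

lemma card_filter_adj_le [DecidableEq V] (Q : Finset V) {x : V} (hx : x ∈ Q) :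
    #(Q.filter (G.Adj x)) ≤ #Q - 1 := by
  rw [← card_erase_of_mem hx]
  exact card_le_card fun y hy => mem_erase.mpr
    ⟨(G.ne_of_adj (mem_filter.mp hy).2).symm, (mem_filter.mp hy).1⟩

end SimpleGraph

lemma Finset.card_filter_eq_succ_eq_one_of_sum_le {ι : Type*} (s : Finset ι) (d : ι → ℕ) (m : ℕ)
    (hd : ∀ x ∈ s, d x = m ∨ d x = m + 1) (hsum : ∑ x ∈ s, d x ≤ #s * m + 2)
    (heven : Even (∑ x ∈ s, d x)) (hodd : Odd (#s * m)) :
    #(s.filter (d · = m + 1)) = 1 ∧ #(s.filter (d · = m)) = #s - 1 := by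
  have hsplit : ∑ x ∈ s, d x = #s * m + #(s.filter (d · = m + 1)) := by
    rw [sum_congr rfl fun x hx => show d x = m + if d x = m + 1 then 1 else 0 by
      rcases hd x hx with h | h <;> simp [h], sum_add_distrib, sum_const, smul_eq_mul, sum_boole,
      Nat.cast_id]
  have hcompl : #(s.filter (d · = m)) + #(s.filter (d · = m + 1)) = #s := by
    have : s.filter (d · = m) = s.filter (¬ d · = m + 1) :=
      filter_congr fun x hx => by rcases hd x hx with h | h <;> simp [h]
    rw [this, add_comm, card_filter_add_card_filter_not]
  obtain ⟨a, ha⟩ := heven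
  obtain ⟨b, hb⟩ := hodd
  omega

lemma le_two_mul_add_three_of_sum_bound {t q S : ℕ} (ht : 1 < t) (hS : q * (q - 2) ≤ S)
    (hbound : 2 * ((t : ℝ) + 1) ^ 2 * S ≤
      (2 * t - 1) * (q * (2 * (t + 1) ^ 2 - q)) + (4 * t + 1) * q ^ 2) :
    q ≤ 2 * t + 3 := by
  by_contra! hq
  have hT : (2 : ℝ) ≤ t := by exact_mod_cast ht
  have hq' : 2 * (t : ℝ) + 4 ≤ q := by exact_mod_cast hq
  have hS' : (q : ℝ) * (q - 2) ≤ S := by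
    have : ((q * (q - 2) : ℕ) : ℝ) ≤ S := by exact_mod_cast hS
    rwa [Nat.cast_mul, Nat.cast_sub (by omega), Nat.cast_two] at this
  have hqpos : (0 : ℝ) < q := by linarith
  have hlin : (q : ℝ) * t ≤ (2 * t + 1) * (t + 1) := by
    nlinarith [mul_le_mul_of_nonneg_left hS' (by positivity : (0 : ℝ) ≤ 2 * ((t : ℝ) + 1) ^ 2)]
  nlinarith

lemma sum_le_of_sum_bound_at_two_mul_add_three {t S : ℕ} (ht : 0 < t)
    (hbound : 2 * ((t : ℝ) + 1) ^ 2 * S ≤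
      (2 * t - 1) * ((2 * t + 3 : ℕ) * (2 * (t + 1) ^ 2 - (2 * t + 3 : ℕ))) +
        (4 * t + 1) * (2 * t + 3 : ℕ) ^ 2) :
    S ≤ (2 * t + 3) * (2 * t + 1) + 2 := by
  have hT : (1 : ℝ) ≤ t := by exact_mod_cast ht
  push_cast at hbound
  have : (S : ℝ) < (2 * t + 3) * (2 * t + 1) + 3 := by
    by_contra! h
    nlinarith [mul_le_mul_of_nonneg_left h (by positivity : (0 : ℝ) ≤ 2 * ((t : ℝ) + 1) ^ 2)]
  have : S < (2 * t + 3) * (2 * t + 1) + 3 := by exact_mod_cast this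
  omega

/-- Let `t > 1` and let `G` be a finite simple graph whose adjacency matrix has spectrum
`{(4t+1)^1, (2t−1)^{2t}, (−1)^{(t+1)^2}, (−3)^{t^2}}`. Let `Q` be a set of `q` vertices of
`G` such that every vertex of `Q` has at least `q−2` neighbors inside `Q`. Then `q ≤ 2t+3`;
moreover, if `q = 2t+3`, then exactly one vertex of `Q` has `2t+2` neighbors inside `Q`, and
the remaining `2t+2` vertices of `Q` each have exactly `2t+1` neighbors inside `Q`. -/
theorem stmt_11 (t : ℕ) (ht : 1 < t) {V : Type*} [Fintype V] [DecidableEq V]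
    (G : SimpleGraph V) [DecidableRel G.Adj]
    (hchar : (G.adjMatrix ℝ).charpoly =
      (X - C (4 * (t : ℝ) + 1)) * (X - C (2 * (t : ℝ) - 1)) ^ (2 * t) *
        (X + 1) ^ ((t + 1) ^ 2) * (X + 3) ^ (t ^ 2))
    (q : ℕ) (Q : Finset V) (hQcard : Q.card = q)
    (hQdeg : ∀ x ∈ Q, q - 2 ≤ (Q.filter (G.Adj x)).card) :
    q ≤ 2 * t + 3 ∧
      (q = 2 * t + 3 →
        (Q.filter fun x => (Q.filter (G.Adj x)).card = 2 * t + 2).card = 1 ∧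
        (Q.filter fun x => (Q.filter (G.Adj x)).card = 2 * t + 1).card = 2 * t + 2) := by
  set d : V → ℕ := fun x => #(Q.filter (G.Adj x))
  have hbound := G.card_mul_sum_card_filter_adj_le_of_charpoly t hchar Q
  rw [hQcard, ← Nat.cast_sum] at hbound
  have hlow : q * (q - 2) ≤ ∑ x ∈ Q, d x := hQcard ▸ Q.card_nsmul_le_sum d (q - 2) hQdeg
  refine ⟨le_two_mul_add_three_of_sum_bound ht hlow hbound, fun hq => ?_⟩
  subst hq
  have hd (x : V) (hx : x ∈ Q) : d x = 2 * t + 1 ∨ d x = 2 * t + 1 + 1 := by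
    have := G.card_filter_adj_le Q hx
    have := hQdeg x hx
    simp only [d]
    omega
  have hodd : Odd (#Q * (2 * t + 1)) := hQcard ▸ Odd.mul ⟨t + 1, by ring⟩ ⟨t, rfl⟩
  have hsum : ∑ x ∈ Q, d x ≤ #Q * (2 * t + 1) + 2 :=
    hQcard ▸ sum_le_of_sum_bound_at_two_mul_add_three (by omega) hbound
  obtain ⟨htop, hrest⟩ := Q.card_filter_eq_succ_eq_one_of_sum_le d (2 * t + 1) hd hsum
    (G.even_sum_card_filter_adj Q) hodd
  exact ⟨htop, by rw [hrest, hQcard]; rfl⟩
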